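/- arXiv:2503.13567 — 4 statements merged into one kernel-verified Lean document; each statement's English description precedes it below -/
import Mathlib

section
/- If a seed infection at node u at time t in a temporal graph under the SIR model yields some consistent infection log in which every node of the graph becomes infected, then in every infection log consistent with that single seed infection, every node becomes infected. -/
/-- A temporal graph: an undirected loopless graph together with a time label on each edge. -/
structure TemporalGraph (V : Type) where
  Adj : V → V → Prop
  symm : ∀ u v, Adj u v → Adj v u
  loopless : ∀ v, ¬ Adj v v
  label : V → V → ℕ
  label_symm : ∀ u v, label u v = label v u

namespace TemporalGraph

variable {V : Type}

/-- Node `u` is recorded as infected at time `t` in the log `L`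
(seed infections are recorded as `(u,u,t)`). -/
def InfTime (L : Set (V × V × ℕ)) (u : V) (t : ℕ) : Prop :=
  ∃ v, (v, u, t) ∈ L

/-- Node `v` is infectious at time `t` according to log `L`, for infectious period `δ`:
it became infected at some `t'` with `t' < t ≤ t' + δ`. -/
def Infectious (δ : ℕ) (L : Set (V × V × ℕ)) (v : V) (t : ℕ) : Prop :=
  ∃ t', InfTime L v t' ∧ t' < t ∧ t ≤ t' + δ

/-- `L` is an infection log of the SIR process on `G` (infectious period `δ`)
consistent with the seed infection set `S`. -/
def ConsistentLog (G : TemporalGraph V) (δ : ℕ) (S : Set (V × ℕ))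
    (L : Set (V × V × ℕ)) : Prop :=
  -- seed infections are exactly the entries `(u,u,t)`
  (∀ u t, (u, u, t) ∈ L ↔ (u, t) ∈ S) ∧
  -- each node is infected at most once (SIR: recovered nodes are resistant)
  (∀ u t t', InfTime L u t → InfTime L u t' → t = t') ∧
  -- a node is infected by exactly one neighbor
  (∀ v v' u t, (v, u, t) ∈ L → (v', u, t) ∈ L → v = v') ∧
  -- every non-seed infection travels along an edge at its label time,
  -- from a node that is infectious at that time
  (∀ v u t, (v, u, t) ∈ L → v ≠ u →
      G.Adj v u ∧ G.label v u = t ∧ Infectious δ L v t) ∧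
  -- maximality: a susceptible node with an infectious neighbor across an
  -- edge whose label is the current time must become infected now
  (∀ v u, G.Adj v u → Infectious δ L v (G.label v u) →
      (∀ t', InfTime L u t' → G.label v u ≤ t') → InfTime L u (G.label v u))

/-- The infection timetable induced by a log: which node got infected when. -/
def Timetable (L : Set (V × V × ℕ)) : Set (V × ℕ) :=
  {p | InfTime L p.1 p.2}

end TemporalGraph

open TemporalGraph in
theorem TemporalGraph.step_aux {V : Type} {G : TemporalGraph V} {δ : ℕ} {S : Set (V × ℕ)}
    {L L' : Set (V × V × ℕ)} (hL : G.ConsistentLog δ S L) (hL' : G.ConsistentLog δ S L')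
    (s : ℕ) (IH : ∀ s' < s, ∀ w, InfTime L w s' ↔ InfTime L' w s')
    {w : V} (h : InfTime L w s) : InfTime L' w s := by
  obtain ⟨v, hv⟩ := h
  by_cases hvw : v = w
  · subst hvw
    exact ⟨v, (hL'.1 v s).2 ((hL.1 v s).1 hv)⟩
  · obtain ⟨hadj, hlab, t', hinf, hlt, hle⟩ := hL.2.2.2.1 v w s hv hvw
    have hinf' : Infectious δ L' v s := ⟨t', (IH t' hlt v).1 hinf, hlt, hle⟩
    have hmin : ∀ t'', InfTime L' w t'' → G.label v w ≤ t'' := by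
      intro t'' ht''
      rw [hlab]
      by_contra hlt'
      push_neg at hlt'
      have := (IH t'' hlt' w).2 ht''
      exact absurd (hL.2.1 w s t'' ⟨v, hv⟩ this) (Nat.ne_of_gt hlt')
    have := hL'.2.2.2.2 v w hadj (by rw [hlab]; exact hinf') hmin
    rwa [hlab] at this

open TemporalGraph in
theorem TemporalGraph.same_times {V : Type} {G : TemporalGraph V} {δ : ℕ} {S : Set (V × ℕ)}
    {L L' : Set (V × V × ℕ)} (hL : G.ConsistentLog δ S L) (hL' : G.ConsistentLog δ S L') :
    ∀ s w, InfTime L w s ↔ InfTime L' w s := by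
  intro s
  induction s using Nat.strong_induction_on with
  | _ s IH =>
    intro w
    constructor
    · exact TemporalGraph.step_aux hL hL' s (fun s' hs' w => IH s' hs' w)
    · exact TemporalGraph.step_aux hL' hL s (fun s' hs' w => (IH s' hs' w).symm)

open TemporalGraph in
/-- If some infection log consistent with the single seed `(u,t)` infects every node,
then every infection log consistent with that seed infects every node. -/
theorem all_infected_of_some {V : Type} (G : TemporalGraph V) (δ : ℕ) (u : V) (t : ℕ)
    (h : ∃ L, G.ConsistentLog δ {(u, t)} L ∧ ∀ w : V, ∃ s, InfTime L w s) :
    ∀ L, G.ConsistentLog δ {(u, t)} L → ∀ w : V, ∃ s, InfTime L w s := by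
  obtain ⟨L0, hL0, hall⟩ := h
  intro L hL w
  obtain ⟨s, hs⟩ := hall w
  exact ⟨s, (TemporalGraph.same_times hL0 hL s w).1 hs⟩
end

section
/- In a temporal graph, any infection chain resulting from a single seed infection is contained in a single δ-edge connected component: if an infection starting from one seed infection passes through two edges e and e', then e and e' lie in the same δ-edge connected component. -/
namespace TemporalGraph

/-- Two (oriented) edges are directly δ-related: both are edges, they share an
endpoint, and their labels differ by at most δ. -/
def EdgeRel {V : Type} (G : TemporalGraph V) (δ : ℕ) (p q : V × V) : Prop :=
  G.Adj p.1 p.2 ∧ G.Adj q.1 q.2 ∧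
    (p.1 = q.1 ∨ p.1 = q.2 ∨ p.2 = q.1 ∨ p.2 = q.2) ∧
    G.label p.1 p.2 ≤ G.label q.1 q.2 + δ ∧ G.label q.1 q.2 ≤ G.label p.1 p.2 + δ

/-- Two edges lie in the same δ-edge connected component: they are related by the
reflexive-transitive closure of the direct δ-relation. -/
def SameComponent {V : Type} (G : TemporalGraph V) (δ : ℕ) (p q : V × V) : Prop :=
  Relation.ReflTransGen (G.EdgeRel δ) p q

end TemporalGraph

/-!
Every infection along an edge `(v, u)` at time `t` is made by a node `v` infected at some
`t₁ ∈ [t - δ, t)`, either as a seed or along an edge `(w, v)` labelled `t₁`; that edge shares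
`v` with `(v, u)` and its label is within `δ`. Following infectors back in time therefore links
every infection edge to an edge out of the seed `s`, and all those edges have labels in
`(t₀, t₀ + δ]`, so any two of them are directly related.
-/

namespace TemporalGraph

variable {V : Type} {G : TemporalGraph V} {δ : ℕ}

instance : Std.Symm (G.EdgeRel δ) where
  symm _ _ := fun ⟨hp, hq, hshare, hle, hge⟩ => ⟨hq, hp, by tauto, hge, hle⟩

theorem SameComponent.symm {p q : V × V} (h : G.SameComponent δ p q) :
    G.SameComponent δ q p :=
  Std.Symm.symm (r := Relation.ReflTransGen (G.EdgeRel δ)) _ _ h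

namespace ConsistentLog

variable {S : Set (V × ℕ)} {L : Set (V × V × ℕ)}

theorem infection_edge (hL : G.ConsistentLog δ S L) {v u : V} {t : ℕ} (h : (v, u, t) ∈ L)
    (hne : v ≠ u) : G.Adj v u ∧ G.label v u = t ∧ Infectious δ L v t :=
  hL.2.2.2.1 v u t h hne

theorem exists_seed_edge_sameComponent (hL : G.ConsistentLog δ S L) {v u : V} {t : ℕ}
    (h : (v, u, t) ∈ L) (hne : v ≠ u) :
    ∃ a tₐ w τ, (a, a, tₐ) ∈ L ∧ (a, w, τ) ∈ L ∧ a ≠ w ∧ G.SameComponent δ (v, u) (a, w) := by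
  induction t using Nat.strong_induction_on generalizing v u with
  | _ t ih =>
    obtain ⟨hadj, hlabel, t₁, ⟨w, hw⟩, hlt, hle⟩ := hL.infection_edge h hne
    by_cases hwv : w = v
    · subst hwv
      exact ⟨w, t₁, u, t, hw, h, hne, .refl⟩
    · obtain ⟨a, tₐ, x, τ, ha, hx, hax, hchain⟩ := ih t₁ hlt hw hwv
      obtain ⟨hadj', hlabel', -⟩ := hL.infection_edge hw hwv
      have hstep : G.EdgeRel δ (v, u) (w, v) :=
        ⟨hadj, hadj', by simp, by simp only [hlabel, hlabel']; omega,
          by simp only [hlabel, hlabel']; omega⟩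
      exact ⟨a, tₐ, x, τ, ha, hx, hax, .head hstep hchain⟩

theorem label_mem_Ioc_of_seed (hL : G.ConsistentLog δ S L) {a w : V} {tₐ τ : ℕ}
    (ha : (a, a, tₐ) ∈ L) (h : (a, w, τ) ∈ L) (hne : a ≠ w) :
    G.label a w ∈ Set.Ioc tₐ (tₐ + δ) := by
  obtain ⟨-, hlabel, t₁, hinf, hlt, hle⟩ := hL.infection_edge h hne
  obtain rfl : t₁ = tₐ := hL.2.1 a t₁ tₐ hinf ⟨a, ha⟩
  exact hlabel ▸ ⟨hlt, hle⟩

theorem edgeRel_of_seed (hL : G.ConsistentLog δ S L) {a w w' : V} {tₐ τ τ' : ℕ}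
    (ha : (a, a, tₐ) ∈ L) (h : (a, w, τ) ∈ L) (hne : a ≠ w)
    (h' : (a, w', τ') ∈ L) (hne' : a ≠ w') : G.EdgeRel δ (a, w) (a, w') := by
  obtain ⟨hlt, hle⟩ := hL.label_mem_Ioc_of_seed ha h hne
  obtain ⟨hlt', hle'⟩ := hL.label_mem_Ioc_of_seed ha h' hne'
  exact ⟨(hL.infection_edge h hne).1, (hL.infection_edge h' hne').1, by simp,
    by dsimp only; omega, by dsimp only; omega⟩

theorem seed_eq_of_singleton {s a : V} {t₀ tₐ : ℕ} (hL : G.ConsistentLog δ {(s, t₀)} L)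
    (ha : (a, a, tₐ) ∈ L) : a = s ∧ tₐ = t₀ :=
  Prod.ext_iff.mp ((hL.1 a tₐ).mp ha)

end ConsistentLog

end TemporalGraph

open TemporalGraph in
/-- Any infection chain resulting from a single seed infection is contained in a
single δ-edge connected component: any two edges along which successful
infections occur lie in the same δ-edge connected component. -/
theorem chain_in_single_component {V : Type} (G : TemporalGraph V) (δ : ℕ)
    (s : V) (t₀ : ℕ) (L : Set (V × V × ℕ)) (hL : G.ConsistentLog δ {(s, t₀)} L)
    (v u v' u' : V) (t t' : ℕ)
    (h1 : (v, u, t) ∈ L) (hne1 : v ≠ u)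
    (h2 : (v', u', t') ∈ L) (hne2 : v' ≠ u') :
    G.SameComponent δ (v, u) (v', u') := by
  obtain ⟨a, tₐ, w, τ, ha, hw, haw, hc⟩ := hL.exists_seed_edge_sameComponent h1 hne1
  obtain ⟨b, t_b, w', τ', hb, hw', hbw', hc'⟩ := hL.exists_seed_edge_sameComponent h2 hne2
  obtain ⟨rfl, rfl⟩ := hL.seed_eq_of_singleton ha
  obtain ⟨rfl, rfl⟩ := hL.seed_eq_of_singleton hb
  exact hc.trans (.head (hL.edgeRel_of_seed ha hw haw hw' hbw') hc'.symm)
end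

section
/- Consider a sequence of independent trials where trial i succeeds with probability p_i ∈ [0,1] and incurs cost n·p_i, stopping at the first success. Then the expected total cost incurred satisfies E[Σ_{i=1}^{T} n·p_i] ≤ 3n/2, where T is the index of the first success. -/
/-- Sequential independent trials, where trial `i` (reached only if all earlier
trials failed) succeeds with probability `p i` and costs `n · p i`: the expected
total cost until the first success,
`Σ_i (n·p_i) · Π_{j<i} (1 − p_j)`, is at most `3n/2`. -/
theorem expected_cost_le (n : ℝ) (hn : 0 ≤ n) (p : ℕ → ℝ)
    (hp : ∀ i, p i ∈ Set.Icc (0 : ℝ) 1) :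
    ∑' i : ℕ, (n * p i) * ∏ j ∈ Finset.range i, (1 - p j) ≤ 3 * n / 2 := by
  have hprod : ∀ N, 0 ≤ ∏ j ∈ Finset.range N, (1 - p j) := by
    intro N
    exact Finset.prod_nonneg fun j _ => by linarith [(hp j).2]
  have hnn : ∀ i, 0 ≤ (n * p i) * ∏ j ∈ Finset.range i, (1 - p j) :=
    fun i => mul_nonneg (mul_nonneg hn (hp i).1) (hprod i)
  have hsum : ∀ N, ∑ i ∈ Finset.range N, (n * p i) * ∏ j ∈ Finset.range i, (1 - p j) ≤ 3 * n / 2 := by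
    intro N
    have key : ∑ i ∈ Finset.range N, (n * p i) * ∏ j ∈ Finset.range i, (1 - p j)
        = n * (1 - ∏ j ∈ Finset.range N, (1 - p j)) := by
      induction N with
      | zero => simp
      | succ N ih =>
        rw [Finset.sum_range_succ, ih, Finset.prod_range_succ]
        ring
    rw [key]
    nlinarith [hprod N]
  exact Summable.tsum_le_of_sum_range_le (summable_of_sum_range_le hnn hsum) hsum
end

section
/- Uniform random watching observes an infection within a linear number of tolerated infections: if in each round i a set of a_i ≤ n nodes becomes infected and the observer watches one node chosen uniformly at random (independently each round), stopping when the watched node is among the infected ones that round, then the expected total number of infections Σ_{i=1}^{T} a_i before stopping is at most 3n/2, where T is the stopping round. -/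
open Finset

/- The `i`-th term is `n` times the probability that round `i` is the first successful one,
so the series is `n` times the probability of ever succeeding, which is at most `1`; the
bound `n` is even stronger than `3n/2`. -/

theorem sum_range_mul_prod_one_sub {R : Type*} [CommRing R] (p : ℕ → R) (N : ℕ) :
    ∑ i ∈ range N, p i * ∏ j ∈ range i, (1 - p j) = 1 - ∏ j ∈ range N, (1 - p j) := by
  induction N with
  | zero => simp
  | succ N ih => rw [sum_range_succ, ih, prod_range_succ]; ring

theorem tsum_mul_prod_one_sub_le_one (p : ℕ → ℝ) (hp : ∀ i, 0 ≤ p i ∧ p i ≤ 1) :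
    ∑' i, p i * ∏ j ∈ range i, (1 - p j) ≤ 1 := by
  have hq : ∀ j, 0 ≤ 1 - p j := fun j => sub_nonneg.2 (hp j).2
  refine Real.tsum_le_of_sum_range_le (fun i => mul_nonneg (hp i).1 (prod_nonneg fun j _ => hq j))
    fun N => ?_
  rw [sum_range_mul_prod_one_sub]
  exact sub_le_self _ (prod_nonneg fun j _ => hq j)

theorem expected_infections_le_general (n : ℕ) (a : ℕ → ℕ)
    (ha : ∀ i, 1 ≤ a i ∧ a i ≤ n) :
    ∑' i : ℕ, (a i : ℝ) * ∏ j ∈ Finset.range i, (1 - (a j : ℝ) / (n : ℝ)) ≤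
      3 * (n : ℝ) / 2 := by
  have hn : (0 : ℝ) < n := by exact_mod_cast (ha 0).1.trans (ha 0).2
  have hp : ∀ i, 0 ≤ (a i : ℝ) / n ∧ (a i : ℝ) / n ≤ 1 := fun i =>
    ⟨by positivity, div_le_one_of_le₀ (by exact_mod_cast (ha i).2) hn.le⟩
  calc ∑' i : ℕ, (a i : ℝ) * ∏ j ∈ range i, (1 - (a j : ℝ) / n)
      = n * ∑' i : ℕ, (a i : ℝ) / n * ∏ j ∈ range i, (1 - (a j : ℝ) / n) := by
        rw [← tsum_mul_left]
        congr 1 with i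
        field_simp
    _ ≤ n * 1 := by gcongr; exact tsum_mul_prod_one_sub_le_one _ hp
    _ ≤ 3 * n / 2 := by linarith

/-- Uniform random watching observes an infection within a linear number of
tolerated infections: if in round `i` a set of `a i` nodes (`1 ≤ a i ≤ n`) becomes
infected and the observer watches a uniformly random node (success probability
`a i / n`, independently each round), then the expected total number of infections
before stopping, `Σ_i a_i · Π_{j<i} (1 − a_j/n)`, is at most `3n/2`. -/
theorem expected_infections_le (n : ℕ) (hn : 1 ≤ n) (a : ℕ → ℕ)
    (ha : ∀ i, 1 ≤ a i ∧ a i ≤ n) :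
    ∑' i : ℕ, (a i : ℝ) * ∏ j ∈ Finset.range i, (1 - (a j : ℝ) / (n : ℝ)) ≤
      3 * (n : ℝ) / 2 :=
  expected_infections_le_general n a ha
end
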